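/- For every real c ≥ 1 with 2c an integer, every finite graph G with growth f_G(r) ≤ cr for all positive integers r does not contain the 2c × 2c grid as a minor. -/

import Mathlib

open SimpleGraph

/-- The subgraph `H` of `G` has radius at most `r`. -/
def SimpleGraph.Subgraph.HasRadiusLE {V : Type*} {G : SimpleGraph V} (H : G.Subgraph) (r : ℕ) : Prop :=
  ∃ v, ∃ hv : v ∈ H.verts, ∀ w, ∀ hw : w ∈ H.verts,
    ∃ p : H.coe.Walk ⟨v, hv⟩ ⟨w, hw⟩, p.length ≤ r

/-- The graph `G` has growth `f_G(r) ≤ c·r` for all positive integers `r`. -/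
def SimpleGraph.GrowthLE {V : Type*} (G : SimpleGraph V) (c : ℝ) : Prop :=
  ∀ r : ℕ, 0 < r → ∀ H : G.Subgraph, H.HasRadiusLE r → (H.verts.ncard : ℝ) ≤ c * r

/-- The `n × n` grid graph. -/
def gridGraph (n : ℕ) : SimpleGraph (Fin n × Fin n) :=
  SimpleGraph.fromRel (fun a b =>
    (a.1 = b.1 ∧ a.2.val + 1 = b.2.val) ∨ (a.2 = b.2 ∧ a.1.val + 1 = b.1.val))

/-- `H` is a minor of `G`, via pairwise disjoint connected branch sets. -/
def SimpleGraph.IsMinorOf {W V : Type*} (H : SimpleGraph W) (G : SimpleGraph V) : Prop :=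
  ∃ B : W → Set V,
    (∀ w, (G.induce (B w)).Connected) ∧
    (Pairwise fun w w' => Disjoint (B w) (B w')) ∧
    (∀ w w', H.Adj w w' → ∃ a ∈ B w, ∃ b ∈ B w', G.Adj a b)

/-! Let `B` be a model of the `m × m` grid in `G` and let `D` be a row or column of branch sets
with the fewest vertices, say a column with `L` vertices. Any two vertices of the connected set
`D` are joined inside `D` by a walk of length `< L`. Each row `R i` is connected, meets `D` and has
at least `L` vertices, so the vertices of `R i` within distance `L` of `R i ∩ D` (inside `R i`)
number at least `L`. These `m` disjoint balls together have at least `mL = 2cL` vertices and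
radius at most `2L - 1` around any vertex of `D`, which contradicts `f_G(2L - 1) ≤ c(2L - 1)`. -/

namespace SimpleGraph

variable {V : Type*} {G : SimpleGraph V}

def ballWithin (G : SimpleGraph V) (S E : Set V) (n : ℕ) : Set V :=
  {y | ∃ x ∈ E, ∃ p : G.Walk x y, p.length ≤ n ∧ ∀ z ∈ p.support, z ∈ S}

section ballWithin

variable {S E : Set V} {n : ℕ}

lemma ballWithin_subset : G.ballWithin S E n ⊆ S :=
  fun _ ⟨_, _, p, _, hp⟩ => hp _ p.end_mem_support

lemma subset_ballWithin (hE : E ⊆ S) : E ⊆ G.ballWithin S E n :=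
  fun x hx => ⟨x, hx, .nil, by simp, by simpa using hE hx⟩

lemma ballWithin_mono {n' : ℕ} (h : n ≤ n') : G.ballWithin S E n ⊆ G.ballWithin S E n' :=
  fun _ ⟨x, hx, p, hl, hp⟩ => ⟨x, hx, p, hl.trans h, hp⟩

/-- Every prefix of a witnessing walk is again a witnessing walk. -/
lemma exists_walk_support_subset_ballWithin {y : V} (hy : y ∈ G.ballWithin S E n) :
    ∃ x ∈ E, ∃ p : G.Walk x y, p.length ≤ n ∧ ∀ z ∈ p.support, z ∈ G.ballWithin S E n := by
  classical
  obtain ⟨x, hx, p, hl, hp⟩ := hy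
  exact ⟨x, hx, p, hl, fun z hz => ⟨x, hx, p.takeUntil z hz,
    (p.length_takeUntil_le_length hz).trans hl,
    fun w hw => hp w (p.support_takeUntil_subset_support hz hw)⟩⟩

lemma mem_ballWithin_succ_of_adj {x y : V} (hx : x ∈ G.ballWithin S E n) (hy : y ∈ S)
    (hxy : G.Adj x y) : y ∈ G.ballWithin S E (n + 1) := by
  obtain ⟨u, hu, p, hl, hp⟩ := hx
  refine ⟨u, hu, p.concat hxy, by rw [Walk.length_concat]; omega, fun z hz => ?_⟩
  simp only [Walk.support_concat, List.mem_append, List.mem_singleton] at hz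
  exact hz.elim (hp z) fun h => h ▸ hy

end ballWithin

lemma exists_adj_of_induce_connected {S A : Set V} (hS : (G.induce S).Connected) {x y : V}
    (hxS : x ∈ S) (hyS : y ∈ S) (hx : x ∈ A) (hy : y ∉ A) :
    ∃ a ∈ A, ∃ b ∈ S, b ∉ A ∧ G.Adj a b := by
  obtain ⟨p⟩ := hS.preconnected ⟨x, hxS⟩ ⟨y, hyS⟩
  obtain ⟨d, -, hd, hd'⟩ := p.exists_boundary_dart {z | ↑z ∈ A} (by exact hx) (by exact hy)
  exact ⟨d.fst, hd, d.snd, d.snd.2, hd', d.adj⟩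

lemma min_le_ncard_ballWithin [Finite V] {S E : Set V} (hS : (G.induce S).Connected)
    (hES : E ⊆ S) (hE : E.Nonempty) (n : ℕ) :
    min (n + 1) S.ncard ≤ (G.ballWithin S E n).ncard := by
  induction n with
  | zero =>
    exact (min_le_left _ _).trans <| (Set.ncard_pos).2 <|
      hE.mono (subset_ballWithin hES)
  | succ n ih =>
    by_cases hfull : S ⊆ G.ballWithin S E n
    · exact (min_le_right _ _).trans <|
        Set.ncard_le_ncard (hfull.trans (ballWithin_mono n.le_succ))
    obtain ⟨y, hyS, hy⟩ := Set.not_subset.1 hfull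
    obtain ⟨x, hx⟩ := hE
    obtain ⟨a, ha, b, hbS, hb, hab⟩ :=
      exists_adj_of_induce_connected hS (hES hx) hyS (subset_ballWithin hES hx) hy
    calc min (n + 1 + 1) S.ncard ≤ min (n + 1) S.ncard + 1 := by omega
      _ ≤ (G.ballWithin S E n).ncard + 1 := by omega
      _ = (insert b (G.ballWithin S E n)).ncard := (Set.ncard_insert_of_notMem hb).symm
      _ ≤ (G.ballWithin S E (n + 1)).ncard := Set.ncard_le_ncard <| Set.insert_subset
          (mem_ballWithin_succ_of_adj ha hbS hab) (ballWithin_mono n.le_succ)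

lemma exists_walk_length_lt_ncard [Finite V] {S : Set V} (hS : (G.induce S).Connected)
    {x y : V} (hx : x ∈ S) (hy : y ∈ S) :
    ∃ p : G.Walk x y, p.length < S.ncard ∧ ∀ z ∈ p.support, z ∈ S := by
  classical
  have := Fintype.ofFinite S
  obtain ⟨q, hq⟩ : ∃ q : (G.induce S).Walk ⟨x, hx⟩ ⟨y, hy⟩, q.length < S.ncard := by
    rw [← Nat.card_coe_set_eq, Nat.card_eq_fintype_card]
    let q := (hS.preconnected ⟨x, hx⟩ ⟨y, hy⟩).some.toPath
    exact ⟨q, q.2.length_lt⟩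
  refine ⟨q.map (Embedding.induce S).toHom, (Walk.length_map _ _).trans_lt hq, fun z hz => ?_⟩
  obtain ⟨w, -, rfl⟩ := List.mem_map.1 ((Walk.support_map _ q).subst (motive := (z ∈ ·)) hz)
  exact w.2

lemma Subgraph.hasRadiusLE_induce_top {T : Set V} {v : V} (hv : v ∈ T) {r : ℕ}
    (h : ∀ w ∈ T, ∃ p : G.Walk v w, p.length ≤ r ∧ ∀ z ∈ p.support, z ∈ T) :
    ((⊤ : G.Subgraph).induce T).HasRadiusLE r := by
  refine ⟨v, hv, fun w hw => ?_⟩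
  obtain ⟨p, hl, hp⟩ := h w hw
  refine ⟨(p.induce T hp).mapLe (induce_eq_coe_induce_top T).le, ?_⟩
  have := congrArg Walk.length (p.map_induce hp)
  rw [Walk.length_map] at this
  exact (Walk.length_mapLe _ _).trans_le (this.trans_le hl)

lemma induce_iUnion_connected {ι : Type*} {K : SimpleGraph ι} (hK : K.Connected)
    {B : ι → Set V} (hB : ∀ i, (G.induce (B i)).Connected)
    (hadj : ∀ i j, K.Adj i j → ∃ a ∈ B i, ∃ b ∈ B j, G.Adj a b) :
    (G.induce (⋃ i, B i)).Connected := by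
  have within (i : ι) {x y : V} (hx : x ∈ B i) (hy : y ∈ B i) :
      (G.induce (⋃ i, B i)).Reachable ⟨x, Set.mem_iUnion_of_mem i hx⟩
        ⟨y, Set.mem_iUnion_of_mem i hy⟩ :=
    ((hB i).preconnected ⟨x, hx⟩ ⟨y, hy⟩).map (G.induceHomOfLE (Set.subset_iUnion B i)).toHom
  have along {i j : ι} (p : K.Walk i j) {x y : V} (hx : x ∈ B i) (hy : y ∈ B j) :
      (G.induce (⋃ i, B i)).Reachable ⟨x, Set.mem_iUnion_of_mem i hx⟩
        ⟨y, Set.mem_iUnion_of_mem j hy⟩ := by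
    induction p generalizing x with
    | nil => exact within _ hx hy
    | cons hij p ih =>
      obtain ⟨a, ha, b, hb, hab⟩ := hadj _ _ hij
      exact (within _ hx ha).trans <| (Adj.reachable (induce_adj.2 hab)).trans (ih hb hy)
  obtain ⟨i⟩ := hK.nonempty
  obtain ⟨⟨x, hx⟩⟩ := (hB i).nonempty
  refine (connected_iff_exists_forall_reachable _).2 ⟨⟨x, Set.mem_iUnion_of_mem i hx⟩, ?_⟩
  rintro ⟨y, hy⟩
  obtain ⟨j, hj⟩ := Set.mem_iUnion.1 hy
  exact along (hK.preconnected i j).some hx hj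

/-- A comb: a connected spine `D` meeting each of the disjoint connected teeth `R i`. -/
theorem exists_subgraph_of_comb [Finite V] {ι : Type*} [Fintype ι] {R : ι → Set V} {D : Set V}
    (hR : ∀ i, (G.induce (R i)).Connected) (hRdisj : Pairwise fun i j => Disjoint (R i) (R j))
    (hD : (G.induce D).Connected) (hDR : D ⊆ ⋃ i, R i) (hmeet : ∀ i, (R i ∩ D).Nonempty)
    (hsmall : ∀ i, D.ncard ≤ (R i).ncard) :
    ∃ (H : G.Subgraph) (L : ℕ), 0 < L ∧ H.HasRadiusLE (2 * L - 1) ∧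
      Fintype.card ι * L ≤ H.verts.ncard := by
  set L := D.ncard
  set ball : ι → Set V := fun i => G.ballWithin (R i) (R i ∩ D) L
  have hDball : D ⊆ ⋃ i, ball i := fun x hx => by
    obtain ⟨i, hi⟩ := Set.mem_iUnion.1 (hDR hx)
    exact Set.mem_iUnion_of_mem i (subset_ballWithin Set.inter_subset_left ⟨hi, hx⟩)
  obtain ⟨⟨v, hv⟩⟩ := hD.nonempty
  refine ⟨(⊤ : G.Subgraph).induce (⋃ i, ball i), L, (Set.ncard_pos).2 ⟨v, hv⟩,
    Subgraph.hasRadiusLE_induce_top (hDball hv) fun w hw => ?_, ?_⟩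
  · obtain ⟨i, hwi⟩ := Set.mem_iUnion.1 hw
    obtain ⟨x, hx, q, hq, hqball⟩ := exists_walk_support_subset_ballWithin hwi
    obtain ⟨p, hp, hpD⟩ := exists_walk_length_lt_ncard hD hv hx.2
    refine ⟨p.append q, by rw [Walk.length_append]; omega, fun z hz => ?_⟩
    rw [Walk.mem_support_append_iff] at hz
    exact hz.elim (fun h => hDball (hpD z h)) (fun h => Set.mem_iUnion_of_mem i (hqball z h))
  · calc Fintype.card ι * L = ∑ _ : ι, L := by simp
      _ ≤ ∑ i, (ball i).ncard := Finset.sum_le_sum fun i _ =>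
          (le_min (by omega) (hsmall i)).trans
            (min_le_ncard_ballWithin (hR i) Set.inter_subset_left (hmeet i) L)
      _ = (⋃ i, ball i).ncard := by
          rw [Set.ncard_iUnion_of_finite (fun _ => Set.toFinite _)
            (fun i j h => (hRdisj h).mono ballWithin_subset ballWithin_subset),
            finsum_eq_sum_of_fintype]

end SimpleGraph

lemma gridGraph_adj_of_pathGraph_adj_right {m : ℕ} (i : Fin m) {j j' : Fin m}
    (h : (pathGraph m).Adj j j') : (gridGraph m).Adj (i, j) (i, j') := by
  rw [pathGraph_adj] at h
  simp only [gridGraph, fromRel_adj, ne_eq, Prod.mk.injEq, true_and]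
  omega

lemma gridGraph_adj_of_pathGraph_adj_left {m : ℕ} (j : Fin m) {i i' : Fin m}
    (h : (pathGraph m).Adj i i') : (gridGraph m).Adj (i, j) (i', j) := by
  rw [pathGraph_adj] at h
  simp only [gridGraph, fromRel_adj, ne_eq, Prod.mk.injEq, and_true, true_and]
  omega

lemma gridGraph_adj_swap {m : ℕ} {a b : Fin m × Fin m} :
    (gridGraph m).Adj a.swap b.swap ↔ (gridGraph m).Adj a b := by
  simp only [gridGraph, fromRel_adj, ne_eq, Prod.swap_inj]
  tauto

lemma exists_subgraph_of_gridGraph_minor_of_column_le {V : Type*} [Finite V]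
    {G : SimpleGraph V} {m : ℕ} {B : Fin m × Fin m → Set V}
    (hB : ∀ w, (G.induce (B w)).Connected) (hdisj : Pairwise fun w w' => Disjoint (B w) (B w'))
    (hadj : ∀ w w', (gridGraph m).Adj w w' → ∃ a ∈ B w, ∃ b ∈ B w', G.Adj a b)
    (j₀ : Fin m) (hj₀ : ∀ i, (⋃ k, B (k, j₀)).ncard ≤ (⋃ j, B (i, j)).ncard) :
    ∃ (H : G.Subgraph) (L : ℕ), 0 < L ∧ H.HasRadiusLE (2 * L - 1) ∧ m * L ≤ H.verts.ncard := by
  have hpath : (pathGraph m).Connected := by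
    obtain ⟨k, rfl⟩ := Nat.exists_eq_add_one_of_ne_zero j₀.pos.ne'
    exact pathGraph_connected k
  simpa using exists_subgraph_of_comb (R := fun i => ⋃ j, B (i, j)) (D := ⋃ k, B (k, j₀))
    (fun i => induce_iUnion_connected hpath (fun j => hB _)
      fun _ _ h => hadj _ _ (gridGraph_adj_of_pathGraph_adj_right i h))
    (fun i i' h => Set.disjoint_iUnion_left.2 fun j => Set.disjoint_iUnion_right.2 fun j' =>
      hdisj fun e => h (congrArg Prod.fst e))
    (induce_iUnion_connected hpath (fun i => hB _)
      fun _ _ h => hadj _ _ (gridGraph_adj_of_pathGraph_adj_left j₀ h))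
    (Set.iUnion_mono fun i => Set.subset_iUnion (fun j => B (i, j)) j₀)
    (fun i => by
      obtain ⟨⟨x, hx⟩⟩ := (hB (i, j₀)).nonempty
      exact ⟨x, Set.mem_iUnion_of_mem j₀ hx, Set.mem_iUnion_of_mem i hx⟩)
    hj₀

lemma SimpleGraph.IsMinorOf.exists_subgraph_of_gridGraph {V : Type*} [Finite V]
    {G : SimpleGraph V} {m : ℕ} (hm : 0 < m) (h : (gridGraph m).IsMinorOf G) :
    ∃ (H : G.Subgraph) (L : ℕ), 0 < L ∧ H.HasRadiusLE (2 * L - 1) ∧ m * L ≤ H.verts.ncard := by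
  obtain ⟨B, hB, hdisj, hadj⟩ := h
  have : Nonempty (Fin m) := ⟨⟨0, hm⟩⟩
  obtain ⟨i₀, -, hi₀⟩ := Finset.univ.exists_min_image (fun i => (⋃ j, B (i, j)).ncard)
    Finset.univ_nonempty
  obtain ⟨j₀, -, hj₀⟩ := Finset.univ.exists_min_image (fun j => (⋃ i, B (i, j)).ncard)
    Finset.univ_nonempty
  rcases le_total (⋃ i, B (i, j₀)).ncard (⋃ j, B (i₀, j)).ncard with hle | hle
  · exact exists_subgraph_of_gridGraph_minor_of_column_le hB hdisj hadj j₀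
      fun i => hle.trans (hi₀ i (Finset.mem_univ i))
  · exact exists_subgraph_of_gridGraph_minor_of_column_le (B := B ∘ Prod.swap)
      (fun w => hB _) (hdisj.comp_of_injective Prod.swap_injective)
      (fun w w' h => hadj _ _ (gridGraph_adj_swap.2 h)) i₀
      fun j => hle.trans (hj₀ j (Finset.mem_univ j))

/-- A finite graph with growth `f_G(r) ≤ c·r`, where `2c` is an integer, has no
`2c × 2c` grid minor. -/
theorem no_grid_minor_of_linear_growth {V : Type} [Fintype V] (G : SimpleGraph V)
    (c : ℝ) (hc : 1 ≤ c) (m : ℕ) (hm : (m : ℝ) = 2 * c) (hgrowth : G.GrowthLE c) :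
    ¬ (gridGraph m).IsMinorOf G := by
  intro hminor
  obtain ⟨H, L, hL, hrad, hcard⟩ :=
    hminor.exists_subgraph_of_gridGraph (by exact_mod_cast (by linarith : (0 : ℝ) < m))
  have hupper := hgrowth (2 * L - 1) (by omega) H hrad
  have hlower : (m * L : ℝ) ≤ H.verts.ncard := by exact_mod_cast hcard
  rw [Nat.cast_sub (by omega), Nat.cast_mul, Nat.cast_ofNat, Nat.cast_one] at hupper
  nlinarith
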